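/- arXiv:1308.4347 — 8 statements merged into one kernel-verified Lean document; each statement's English description precedes it below -/
import Mathlib

section
/- Let n ≥ 1 and let K be a nonempty compact convex subset of the Euclidean space ℝ^{n+1}. Then there is a point c ∈ ℝ^{n+1} such that K is contained in the closed ball with centre c and radius w_max/√2, where w_max is the maximal width of K; in other words, the circumradius of K satisfies r_out ≤ w_max/√2. -/
/-!
Let `c` minimise the distance `r` from a point to the farthest point of `K`. Some two farthest
points `x, y` of `K` satisfy `⟪x - c, y - c⟫ ≤ 0`: otherwise, for one farthest point `a`, all
farthest points lie in the open half-space `⟪· - c, a - c⟫ > 0`, and moving `c` slightly towards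
`a` would bring every point of `K` closer than `r`. Hence
`diam K ^ 2 ≥ ‖x - y‖ ^ 2 ≥ ‖x - c‖ ^ 2 + ‖y - c‖ ^ 2 = 2 r ^ 2`. Finally, the distance of two
points of `K` is at most the width of `K` in their direction.
-/

open Metric Filter Topology Set
open scoped RealInnerProductSpace

noncomputable section

section FarthestDist

variable {α : Type*} [PseudoMetricSpace α] {K : Set α}

def farthestDist (K : Set α) (c : α) : ℝ := sSup (dist c '' K)

lemma dist_le_farthestDist (hK : IsCompact K) {c x : α} (hx : x ∈ K) :
    dist c x ≤ farthestDist K c :=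
  le_csSup (hK.bddAbove_image (continuous_const.dist continuous_id).continuousOn)
    (mem_image_of_mem _ hx)

lemma farthestDist_le (hne : K.Nonempty) {c : α} {b : ℝ} (h : ∀ x ∈ K, dist c x ≤ b) :
    farthestDist K c ≤ b :=
  csSup_le (hne.image _) (forall_mem_image.2 h)

lemma farthestDist_lt_iff (hK : IsCompact K) (hne : K.Nonempty) {c : α} {b : ℝ} :
    farthestDist K c < b ↔ ∀ x ∈ K, dist c x < b :=
  hK.sSup_lt_iff_of_continuous hne (continuous_const.dist continuous_id).continuousOn b

lemma exists_dist_eq_farthestDist (hK : IsCompact K) (hne : K.Nonempty) (c : α) :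
    ∃ x ∈ K, dist c x = farthestDist K c := by
  obtain ⟨x, hx, hmax⟩ :=
    hK.exists_sSup_image_eq hne (f := dist c) (continuous_const.dist continuous_id).continuousOn
  exact ⟨x, hx, hmax.symm⟩

lemma lipschitzWith_farthestDist (hK : IsCompact K) (hne : K.Nonempty) :
    LipschitzWith 1 (farthestDist K) :=
  LipschitzWith.of_le_add fun c c' => farthestDist_le hne fun x hx => by
    linarith [dist_triangle c c' x, dist_le_farthestDist hK (c := c') hx]

lemma exists_forall_farthestDist_le [ProperSpace α] (hK : IsCompact K) (hne : K.Nonempty) :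
    ∃ c, ∀ c', farthestDist K c ≤ farthestDist K c' := by
  obtain ⟨x₀, hx₀⟩ := hne
  have : Nonempty α := ⟨x₀⟩
  exact (lipschitzWith_farthestDist hK ⟨x₀, hx₀⟩).continuous.exists_forall_le <|
    tendsto_atTop_mono (fun c => dist_le_farthestDist hK hx₀)
      (tendsto_dist_right_cocompact_atTop x₀)

end FarthestDist

section InnerProductSpace

variable {E : Type*} [NormedAddCommGroup E] [InnerProductSpace ℝ E] {K : Set E}

lemma exists_farthestDist_lt_of_inner_pos (hK : IsCompact K) (hne : K.Nonempty) {c v : E}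
    (hv : ∀ x ∈ K, dist c x = farthestDist K c → 0 < ⟪x - c, v⟫) :
    ∃ t : ℝ, farthestDist K (c + t • v) < farthestDist K c := by
  set r := farthestDist K c
  obtain ⟨ε, hε, hεle⟩ : ∃ ε > 0, ∀ x ∈ K, ε ≤ max (r - dist c x) ⟪x - c, v⟫ := by
    refine hK.exists_forall_le' (by fun_prop) fun x hx => ?_
    rcases (dist_le_farthestDist hK (c := c) hx).lt_or_eq with hlt | heq
    · exact lt_max_of_lt_left (sub_pos.2 hlt)
    · exact lt_max_of_lt_right (hv x hx heq)
  have hsmall : ∀ᶠ t in 𝓝 (0 : ℝ), t * ‖v‖ < ε ∧ t * ‖v‖ ^ 2 < 2 * ε :=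
    (ContinuousAt.eventually_lt (by fun_prop) continuousAt_const (by simpa using hε)).and
      (ContinuousAt.eventually_lt (by fun_prop) continuousAt_const (by simpa using hε))
  obtain ⟨t, ⟨htv, htv2⟩, ht⟩ :=
    ((hsmall.filter_mono nhdsWithin_le_nhds).and (self_mem_nhdsWithin (s := Ioi 0))).exists
  refine ⟨t, (farthestDist_lt_iff hK hne).2 fun x hx => ?_⟩
  have hxr : dist c x ≤ r := dist_le_farthestDist hK hx
  rcases le_max_iff.1 (hεle x hx) with hnear | hfar
  · calc dist (c + t • v) x ≤ dist (c + t • v) c + dist c x := dist_triangle _ _ _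
      _ = dist c x + t * ‖v‖ := by
          rw [dist_self_add_left, norm_smul, Real.norm_of_nonneg ht.le, add_comm]
      _ < r := by linarith
  · have hsq : dist (c + t • v) x ^ 2 = dist c x ^ 2 - 2 * t * ⟪x - c, v⟫ + t ^ 2 * ‖v‖ ^ 2 := by
      rw [dist_comm, dist_comm c, dist_eq_norm, dist_eq_norm, sub_add_eq_sub_sub,
        norm_sub_sq_real, real_inner_smul_right, norm_smul, Real.norm_of_nonneg ht.le]
      ring
    have hr : 0 ≤ r := dist_nonneg.trans hxr
    refine lt_of_pow_lt_pow_left₀ 2 hr ?_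
    nlinarith [pow_le_pow_left₀ dist_nonneg hxr 2]

lemma exists_inner_nonpos_of_forall_farthestDist_le (hK : IsCompact K) (hne : K.Nonempty)
    {c : E} (hc : ∀ c', farthestDist K c ≤ farthestDist K c') :
    ∃ x ∈ K, ∃ y ∈ K, dist c x = farthestDist K c ∧ dist c y = farthestDist K c ∧
      ⟪x - c, y - c⟫ ≤ 0 := by
  obtain ⟨a, ha, hca⟩ := exists_dist_eq_farthestDist hK hne c
  by_contra! h
  obtain ⟨t, ht⟩ := exists_farthestDist_lt_of_inner_pos hK hne (v := a - c)
    fun x hx hcx => h x hx a ha hcx hca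
  exact (hc _).not_gt ht

theorem exists_subset_closedBall_diam_div_sqrt_two [ProperSpace E] (hK : IsCompact K)
    (hne : K.Nonempty) : ∃ c, K ⊆ closedBall c (diam K / √2) := by
  obtain ⟨c, hc⟩ := exists_forall_farthestDist_le hK hne
  obtain ⟨x, hx, y, hy, hcx, hcy, hxy⟩ :=
    exists_inner_nonpos_of_forall_farthestDist_le hK hne hc
  set r := farthestDist K c
  have hr : 2 * r ^ 2 ≤ diam K ^ 2 :=
    calc 2 * r ^ 2 ≤ ‖x - c‖ ^ 2 - 2 * ⟪x - c, y - c⟫ + ‖y - c‖ ^ 2 := by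
          rw [← dist_eq_norm, ← dist_eq_norm, dist_comm, hcx, dist_comm, hcy]
          linarith
      _ = dist x y ^ 2 := by
          rw [← norm_sub_sq_real, sub_sub_sub_cancel_right, dist_eq_norm]
      _ ≤ diam K ^ 2 := by gcongr; exact dist_le_diam_of_mem hK.isBounded hx hy
  refine ⟨c, fun z hz => ?_⟩
  have hzr : dist z c ≤ r := dist_comm z c ▸ dist_le_farthestDist hK hz
  rw [mem_closedBall, le_div_iff₀ (by positivity)]
  refine le_of_pow_le_pow_left₀ two_ne_zero diam_nonneg ?_
  rw [mul_pow, Real.sq_sqrt zero_le_two]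
  nlinarith [pow_le_pow_left₀ dist_nonneg hzr 2]

def supportFun (K : Set E) (z : E) : ℝ := sSup ((fun x => ⟪x, z⟫) '' K)

def maxWidth (K : Set E) : ℝ :=
  sSup ((fun z => supportFun K z + supportFun K (-z)) '' {z | ‖z‖ = 1})

lemma inner_le_supportFun (hK : IsCompact K) {x : E} (hx : x ∈ K) (z : E) :
    ⟪x, z⟫ ≤ supportFun K z :=
  le_csSup (hK.bddAbove_image (continuous_id.inner continuous_const).continuousOn)
    (mem_image_of_mem _ hx)

lemma supportFun_le (hne : K.Nonempty) {M : ℝ} (hM : ∀ x ∈ K, ‖x‖ ≤ M) (z : E) :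
    supportFun K z ≤ M * ‖z‖ :=
  csSup_le (hne.image _) <| forall_mem_image.2 fun x hx =>
    (real_inner_le_norm x z).trans (by gcongr; exact hM x hx)

lemma width_le_maxWidth (hK : IsCompact K) (hne : K.Nonempty) {z : E} (hz : ‖z‖ = 1) :
    supportFun K z + supportFun K (-z) ≤ maxWidth K := by
  obtain ⟨M, hM⟩ := isBounded_iff_forall_norm_le.1 hK.isBounded
  refine le_csSup ⟨M + M, forall_mem_image.2 fun w (hw : ‖w‖ = 1) => ?_⟩ ⟨z, hz, rfl⟩
  simpa [hw] using add_le_add (supportFun_le hne hM w) (supportFun_le hne hM (-w))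

lemma maxWidth_nonneg (hK : IsCompact K) (hne : K.Nonempty) : 0 ≤ maxWidth K := by
  obtain ⟨x, hx⟩ := hne
  refine Real.sSup_nonneg <| forall_mem_image.2 fun z _ => ?_
  have := inner_le_supportFun hK hx z
  have := inner_le_supportFun hK hx (-z)
  rw [inner_neg_right] at this
  linarith

lemma dist_le_maxWidth (hK : IsCompact K) {x y : E} (hx : x ∈ K) (hy : y ∈ K) :
    dist x y ≤ maxWidth K := by
  rcases eq_or_ne x y with rfl | hxy
  · simpa using maxWidth_nonneg hK ⟨x, hx⟩
  set z := ‖x - y‖⁻¹ • (x - y)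
  have hxy' : ‖x - y‖ ≠ 0 := norm_ne_zero_iff.2 (sub_ne_zero.2 hxy)
  have hz : ‖z‖ = 1 := by rw [norm_smul, norm_inv, norm_norm, inv_mul_cancel₀ hxy']
  calc dist x y = ⟪x, z⟫ + ⟪y, -z⟫ := by
        rw [inner_neg_right, ← sub_eq_add_neg, ← inner_sub_left, real_inner_smul_right,
          real_inner_self_eq_norm_sq, dist_eq_norm]
        field_simp
    _ ≤ supportFun K z + supportFun K (-z) :=
        add_le_add (inner_le_supportFun hK hx z) (inner_le_supportFun hK hy (-z))
    _ ≤ maxWidth K := width_le_maxWidth hK ⟨x, hx⟩ hz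

lemma diam_le_maxWidth (hK : IsCompact K) (hne : K.Nonempty) : diam K ≤ maxWidth K :=
  diam_le_of_forall_dist_le (maxWidth_nonneg hK hne) fun _ hx _ hy => dist_le_maxWidth hK hx hy

end InnerProductSpace

end

theorem circumradius_le_maxWidth_div_sqrt_two_general
    (n : ℕ)
    (K : Set (EuclideanSpace ℝ (Fin (n + 1))))
    (hKcp : IsCompact K)
    (S : EuclideanSpace ℝ (Fin (n + 1)) → ℝ)
    (hS : ∀ z, S z = sSup ((fun x => (inner ℝ x z : ℝ)) '' K))
    (wmax : ℝ)
    (hw : wmax = sSup ((fun z => S z + S (-z)) ''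
      {z : EuclideanSpace ℝ (Fin (n + 1)) | ‖z‖ = 1})) :
    ∃ c : EuclideanSpace ℝ (Fin (n + 1)),
      K ⊆ closedBall c (wmax / Real.sqrt 2) := by
  rcases K.eq_empty_or_nonempty with rfl | hKne
  · exact ⟨0, empty_subset _⟩
  obtain rfl : S = supportFun K := funext hS
  obtain rfl : wmax = maxWidth K := hw
  obtain ⟨c, hc⟩ := exists_subset_closedBall_diam_div_sqrt_two hKcp hKne
  exact ⟨c, hc.trans (closedBall_subset_closedBall (by gcongr; exact diam_le_maxWidth hKcp hKne))⟩

/-- For a nonempty compact convex set `K` in Euclidean space `ℝ^{n+1}`, the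
circumradius of `K` is at most `w_max / √2`, where `w_max` is the maximal width
of `K`, i.e. the supremum over unit vectors `z` of `S z + S (-z)` for the
support function `S`. -/
theorem circumradius_le_maxWidth_div_sqrt_two
    (n : ℕ) (hn : 1 ≤ n)
    (K : Set (EuclideanSpace ℝ (Fin (n + 1))))
    (hKne : K.Nonempty) (hKcp : IsCompact K) (hKcv : Convex ℝ K)
    (S : EuclideanSpace ℝ (Fin (n + 1)) → ℝ)
    (hS : ∀ z, S z = sSup ((fun x => (inner ℝ x z : ℝ)) '' K))
    (wmax : ℝ)
    (hw : wmax = sSup ((fun z => S z + S (-z)) ''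
      {z : EuclideanSpace ℝ (Fin (n + 1)) | ‖z‖ = 1})) :
    ∃ c : EuclideanSpace ℝ (Fin (n + 1)),
      K ⊆ closedBall c (wmax / Real.sqrt 2) :=
  circumradius_le_maxWidth_div_sqrt_two_general n K hKcp S hS wmax hw
end

section
/- Let n ≥ 1 and let K be a compact convex subset of the Euclidean space ℝ^{n+1} with nonempty interior. Then there is a point c ∈ ℝ^{n+1} such that the closed ball with centre c and radius w_min/(n+2) is contained in K; in other words, the inradius of K satisfies r_in ≥ w_min/(n+2). -/
/-!
Cut `K` by every supporting half-space pushed inward by `r = w_min / (d + 1)`, where `d` is the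
dimension. Any `d + 1` of these cuts meet: if `p_u` is a point of `K` extremal in direction `-u`,
the centroid of the `p_u` lies at depth at least `w(u) / (d + 1) ≥ r` below the supporting
hyperplane in direction `u`. By Helly's theorem all cuts share a point `c`, and a separating
hyperplane shows that the ball of radius `r` about `c` lies in `K`.
-/

open Finset Metric RealInnerProductSpace

noncomputable section

variable {E : Type*} [NormedAddCommGroup E] [InnerProductSpace ℝ E]

namespace Set

def supportFunction (K : Set E) (z : E) : ℝ :=
  sSup ((fun x => ⟪x, z⟫) '' K)

def width (K : Set E) (z : E) : ℝ :=
  K.supportFunction z + K.supportFunction (-z)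

def minWidth (K : Set E) : ℝ :=
  sInf (K.width '' {z | ‖z‖ = 1})

end Set

variable {K : Set E}

theorem IsCompact.inner_le_supportFunction (hK : IsCompact K) (z : E) {x : E} (hx : x ∈ K) :
    ⟪x, z⟫ ≤ K.supportFunction z :=
  le_csSup (hK.image (continuous_id.inner continuous_const :
    Continuous fun x : E => ⟪x, z⟫)).bddAbove (Set.mem_image_of_mem _ hx)

theorem IsCompact.exists_inner_eq_supportFunction (hK : IsCompact K) (hne : K.Nonempty) (z : E) :
    ∃ p ∈ K, ⟪p, z⟫ = K.supportFunction z := by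
  obtain ⟨p, hpK, hp⟩ :=
    hK.exists_sSup_image_eq hne
      (continuous_id.inner continuous_const : Continuous fun x : E => ⟪x, z⟫).continuousOn
  exact ⟨p, hpK, hp.symm⟩

theorem IsCompact.width_nonneg (hK : IsCompact K) (hne : K.Nonempty) (z : E) :
    0 ≤ K.width z := by
  obtain ⟨x, hx⟩ := hne
  have h := hK.inner_le_supportFunction z hx
  have h' := hK.inner_le_supportFunction (-z) hx
  rw [inner_neg_right] at h'
  unfold Set.width
  linarith

theorem IsCompact.minWidth_le_width (hK : IsCompact K) (hne : K.Nonempty) {z : E}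
    (hz : ‖z‖ = 1) :
    K.minWidth ≤ K.width z :=
  csInf_le ⟨0, by rintro _ ⟨u, -, rfl⟩; exact hK.width_nonneg hne u⟩ ⟨z, hz, rfl⟩

/-- The point `p j`, extremal in direction `-u`, lies at depth `K.width u` below the supporting
hyperplane in direction `u`; averaging with the other points divides this depth by `#I`. -/
theorem IsCompact.inner_centroid_le {ι : Type*} (hK : IsCompact K) {I : Finset ι} {p : ι → E}
    (hp : ∀ i ∈ I, p i ∈ K) {j : ι} (hj : j ∈ I) {u : E}
    (hpj : ⟪p j, -u⟫ = K.supportFunction (-u)) :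
    ⟪(#I : ℝ)⁻¹ • ∑ i ∈ I, p i, u⟫ ≤ K.supportFunction u - K.width u / #I := by
  classical
  have hI : (0 : ℝ) < #I := by exact_mod_cast card_pos.2 ⟨j, hj⟩
  have hpj' : ⟪p j, u⟫ = K.supportFunction u - K.width u := by
    rw [inner_neg_right] at hpj
    unfold Set.width
    linarith
  have hrest : ∑ i ∈ I.erase j, ⟪p i, u⟫ ≤ (#I - 1 : ℝ) * K.supportFunction u := by
    calc ∑ i ∈ I.erase j, ⟪p i, u⟫
        ≤ ∑ i ∈ I.erase j, K.supportFunction u :=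
          sum_le_sum fun i hi => hK.inner_le_supportFunction u (hp i (mem_of_mem_erase hi))
      _ = (#I - 1 : ℝ) * K.supportFunction u := by
          rw [sum_const, card_erase_of_mem hj, nsmul_eq_mul,
            Nat.cast_sub (card_pos.2 ⟨j, hj⟩), Nat.cast_one]
  rw [real_inner_smul_left, sum_inner, ← add_sum_erase I _ hj, hpj', inv_mul_le_iff₀ hI]
  calc _ ≤ K.supportFunction u - K.width u + (#I - 1 : ℝ) * K.supportFunction u := by
        gcongr
    _ = #I * (K.supportFunction u - K.width u / #I) := by
        field_simp
        ring

theorem IsCompact.closedBall_subset_of_forall_inner_add_le [CompleteSpace E] (hK : IsCompact K)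
    (hKcv : Convex ℝ K) (hne : K.Nonempty) {c : E} {r : ℝ}
    (hc : ∀ u : E, ‖u‖ = 1 → ⟪c, u⟫ + r ≤ K.supportFunction u) :
    closedBall c r ⊆ K := by
  intro y hy
  by_contra hyK
  obtain ⟨f, t, hft, hty⟩ := geometric_hahn_banach_closed_point hKcv hK.isClosed hyK
  set v := (InnerProductSpace.toDual ℝ E).symm f
  have hvf (x : E) : ⟪v, x⟫ = f x := InnerProductSpace.toDual_symm_apply
  have hv : 0 < ‖v‖ := by
    refine norm_pos_iff.2 fun hv0 => ?_
    obtain ⟨x, hx⟩ := hne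
    have hx' := hft x hx
    rw [← hvf, hv0, inner_zero_left] at hx'
    rw [← hvf, hv0, inner_zero_left] at hty
    linarith
  set u := ‖v‖⁻¹ • v
  have hu : ‖u‖ = 1 := by rw [norm_smul, norm_inv, norm_norm, inv_mul_cancel₀ hv.ne']
  have hinner (x : E) : ⟪x, u⟫ = ‖v‖⁻¹ * f x := by
    rw [real_inner_smul_right, real_inner_comm, hvf]
  have hsep : K.supportFunction u < ⟪y, u⟫ := by
    obtain ⟨q, hqK, hq⟩ := hK.exists_inner_eq_supportFunction hne u
    rw [← hq, hinner, hinner]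
    exact mul_lt_mul_of_pos_left (by linarith [hft q hqK]) (inv_pos.2 hv)
  have hyc : ⟪y - c, u⟫ ≤ r := by
    calc ⟪y - c, u⟫ ≤ ‖y - c‖ * ‖u‖ := real_inner_le_norm _ _
      _ ≤ r := by rw [hu, mul_one, ← dist_eq_norm]; exact hy
  rw [inner_sub_left] at hyc
  linarith [hc u hu]

theorem IsCompact.nonempty_iInter_inward_cuts (hK : IsCompact K) (hKcv : Convex ℝ K)
    (hne : K.Nonempty) {m : ℕ} (I : Finset {u : E // ‖u‖ = 1}) (hI : #I ≤ m) :
    (⋂ u ∈ I, K ∩ {x | ⟪x, u.1⟫ ≤ K.supportFunction u - K.minWidth / m}).Nonempty := by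
  rcases I.eq_empty_or_nonempty with rfl | hIne
  · simp
  choose p hpK hp using
    fun u : {u : E // ‖u‖ = 1} => hK.exists_inner_eq_supportFunction hne (-u.1)
  have hcard : (0 : ℝ) < #I := by exact_mod_cast hIne.card_pos
  refine ⟨(#I : ℝ)⁻¹ • ∑ i ∈ I, p i, Set.mem_iInter₂.2 fun u hu => ⟨?_, ?_⟩⟩
  · have h := hKcv.centerMass_mem (t := I) (w := fun _ => (1 : ℝ)) (z := p)
      (fun _ _ => zero_le_one) (by simpa using hIne) (fun i _ => hpK i)
    simpa [Finset.centerMass] using h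
  · refine (hK.inner_centroid_le (fun i _ => hpK i) hu (hp u)).trans (sub_le_sub_left ?_ _)
    exact div_le_div₀ (hK.width_nonneg hne _) (hK.minWidth_le_width hne u.2) hcard
      (by exact_mod_cast hI)

theorem IsCompact.exists_closedBall_minWidth_div_subset [FiniteDimensional ℝ E] (hK : IsCompact K)
    (hKcv : Convex ℝ K) (hne : K.Nonempty) :
    ∃ c : E, closedBall c (K.minWidth / (Module.finrank ℝ E + 1)) ⊆ K := by
  set r := K.minWidth / (Module.finrank ℝ E + 1)
  obtain ⟨c, hc⟩ := Convex.helly_theorem_compact' (𝕜 := ℝ)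
    (F := fun u : {u : E // ‖u‖ = 1} => K ∩ {x | ⟪x, u.1⟫ ≤ K.supportFunction u - r})
    (fun u => hKcv.inter (by
      simpa only [innerₛₗ_apply_apply, real_inner_comm] using
        convex_halfSpace_le (innerₛₗ ℝ u.1).isLinear _))
    (fun u => hK.inter_right (isClosed_le (continuous_id.inner continuous_const) continuous_const))
    (fun I hI => by simpa [r] using hK.nonempty_iInter_inward_cuts hKcv hne I hI)
  refine ⟨c, hK.closedBall_subset_of_forall_inner_add_le hKcv hne fun u hu => ?_⟩
  have hcu : ⟪c, u⟫ ≤ K.supportFunction u - r := (Set.mem_iInter.1 hc ⟨u, hu⟩).2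
  linarith

end

theorem inradius_ge_minWidth_div_general
    (n : ℕ)
    (K : Set (EuclideanSpace ℝ (Fin (n + 1))))
    (hKint : (interior K).Nonempty) (hKcp : IsCompact K) (hKcv : Convex ℝ K)
    (S : EuclideanSpace ℝ (Fin (n + 1)) → ℝ)
    (hS : ∀ z, S z = sSup ((fun x => (inner ℝ x z : ℝ)) '' K))
    (wmin : ℝ)
    (hw : wmin = sInf ((fun z => S z + S (-z)) ''
      {z : EuclideanSpace ℝ (Fin (n + 1)) | ‖z‖ = 1})) :
    ∃ c : EuclideanSpace ℝ (Fin (n + 1)),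
      closedBall c (wmin / ((n : ℝ) + 2)) ⊆ K := by
  have hSK : S = K.supportFunction := funext hS
  have hwK : wmin = K.minWidth := by rw [hw, hSK]; rfl
  have hdim : ((n : ℝ) + 2) = Module.finrank ℝ (EuclideanSpace ℝ (Fin (n + 1))) + 1 := by
    rw [finrank_euclideanSpace_fin]; push_cast; ring
  rw [hwK, hdim]
  exact hKcp.exists_closedBall_minWidth_div_subset hKcv (hKint.mono interior_subset)

/-- For a compact convex set `K` in Euclidean space `ℝ^{n+1}` with nonempty
interior, the inradius of `K` is at least `w_min / (n+2)`, where `w_min` is the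
minimal width of `K`, i.e. the infimum over unit vectors `z` of `S z + S (-z)`
for the support function `S`. -/
theorem inradius_ge_minWidth_div
    (n : ℕ) (hn : 1 ≤ n)
    (K : Set (EuclideanSpace ℝ (Fin (n + 1))))
    (hKint : (interior K).Nonempty) (hKcp : IsCompact K) (hKcv : Convex ℝ K)
    (S : EuclideanSpace ℝ (Fin (n + 1)) → ℝ)
    (hS : ∀ z, S z = sSup ((fun x => (inner ℝ x z : ℝ)) '' K))
    (wmin : ℝ)
    (hw : wmin = sInf ((fun z => S z + S (-z)) ''
      {z : EuclideanSpace ℝ (Fin (n + 1)) | ‖z‖ = 1})) :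
    ∃ c : EuclideanSpace ℝ (Fin (n + 1)),
      closedBall c (wmin / ((n : ℝ) + 2)) ⊆ K :=
  inradius_ge_minWidth_div_general n K hKint hKcp hKcv S hS wmin hw
end

section
/- Let n ≥ 2 and 0 < ε ≤ 1, and let λ = (λ₁,…,λₙ) ∈ ℝⁿ with λᵢ > 0 for all i satisfy ε λ_max ≤ λ_min, where λ_min and λ_max are the smallest and largest of the λᵢ. Then for every index i one has √ε / n ≤ (H(λ) − λᵢ) / R(λ)^{1/2} ≤ 1/ε; that is, the partial derivatives ḟ^i = R^{−1/2}(H − λᵢ) of the speed function f = R^{1/2} satisfy ε^{1/2}/n ≤ ḟ^i ≤ ε^{−1}. -/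
/-!
Fix `i`, let `S = H - λᵢ = ∑_{j ≠ i} λⱼ` and `Q = ∑_{j ≠ i} λⱼ²`, so that
`R = 2 λᵢ S + (S² - Q)` with `0 ≤ Q ≤ S²`. Pinching gives `ε λᵢ ≤ S` and `ε Q ≤ λᵢ S`
(and forces `ε ≤ 1`). The first yields `ε R ≤ 3 S² ≤ (2 S)²`, the second `(ε S)² ≤ R`;
taking square roots gives `√ε / 2 ≤ S / √R ≤ 1 / ε`.
-/

open Finset

theorem Finset.mul_sum_sq_le_of_mul_le {ι : Type*} {s : Finset ι} {f : ι → ℝ} {ε c : ℝ}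
    (hf : ∀ j ∈ s, 0 ≤ f j) (h : ∀ j ∈ s, ε * f j ≤ c) :
    ε * ∑ j ∈ s, f j ^ 2 ≤ c * ∑ j ∈ s, f j := by
  rw [mul_sum, mul_sum]
  refine sum_le_sum fun j hj => ?_
  calc ε * f j ^ 2 = (ε * f j) * f j := by ring
    _ ≤ c * f j := mul_le_mul_of_nonneg_right (h j hj) (hf j hj)

theorem Finset.sq_sum_sub_sum_sq_eq_erase {ι : Type*} [Fintype ι] [DecidableEq ι]
    (f : ι → ℝ) (i : ι) :
    (∑ j, f j) ^ 2 - ∑ j, f j ^ 2 =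
      2 * f i * ∑ j ∈ univ.erase i, f j +
        ((∑ j ∈ univ.erase i, f j) ^ 2 - ∑ j ∈ univ.erase i, f j ^ 2) := by
  rw [← add_sum_erase _ f (mem_univ i), ← add_sum_erase _ (f · ^ 2) (mem_univ i)]
  ring

section PinchedBounds

variable {ε a S Q : ℝ}

theorem sqrt_div_two_le_div_sqrt_of_pinched (hε0 : 0 ≤ ε) (hε1 : ε ≤ 1) (ha : 0 < a)
    (hS : 0 < S) (hQ0 : 0 ≤ Q) (hQS : Q ≤ S ^ 2) (haS : ε * a ≤ S) :
    √ε / 2 ≤ S / √(2 * a * S + (S ^ 2 - Q)) := by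
  have hR : 0 < 2 * a * S + (S ^ 2 - Q) := by nlinarith [mul_pos ha hS]
  have hεR : ε * (2 * a * S + (S ^ 2 - Q)) ≤ (2 * S) ^ 2 := by
    nlinarith [mul_le_mul_of_nonneg_right haS hS.le, mul_le_mul_of_nonneg_right hε1 (sq_nonneg S),
      mul_nonneg hε0 hQ0]
  have key : √ε * √(2 * a * S + (S ^ 2 - Q)) ≤ 2 * S := by
    rw [← Real.sqrt_mul hε0]
    exact Real.sqrt_le_iff.2 ⟨by positivity, hεR⟩
  rw [div_le_div_iff₀ two_pos (Real.sqrt_pos.2 hR)]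
  linarith

theorem div_sqrt_le_inv_of_pinched (hε0 : 0 < ε) (hε1 : ε ≤ 1) (ha : 0 < a)
    (hS : 0 < S) (hQS : Q ≤ S ^ 2) (hQa : ε * Q ≤ a * S) :
    S / √(2 * a * S + (S ^ 2 - Q)) ≤ 1 / ε := by
  have hsq : (ε * S) ^ 2 ≤ 2 * a * S + (S ^ 2 - Q) := by
    have hε2 : ε ^ 2 ≤ ε := by nlinarith
    nlinarith [mul_pos ha hS, mul_le_mul_of_nonneg_right hε2 (sub_nonneg.2 hQS),
      mul_le_mul_of_nonneg_right hε1 (sub_nonneg.2 hQS)]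
  have key : ε * S ≤ √(2 * a * S + (S ^ 2 - Q)) :=
    (Real.le_sqrt (by positivity) (by nlinarith [mul_pos ha hS])).2 hsq
  rw [div_le_div_iff₀ ((by positivity : 0 < ε * S).trans_le key) hε0]
  linarith

end PinchedBounds

theorem speed_derivative_pinching_general
    (n : ℕ) (hn : 2 ≤ n) (ε : ℝ) (hε0 : 0 < ε)
    (lam : Fin n → ℝ) (hpos : ∀ i, 0 < lam i)
    (H R : ℝ) (hH : H = ∑ i, lam i) (hR : R = H ^ 2 - ∑ i, (lam i) ^ 2)
    (hpinch : ∀ i j, ε * lam i ≤ lam j) :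
    ∀ i, Real.sqrt ε / (n : ℝ) ≤ (H - lam i) / Real.sqrt R ∧
      (H - lam i) / Real.sqrt R ≤ 1 / ε := by
  intro i
  obtain ⟨j, hji⟩ : ∃ j : Fin n, j ≠ i :=
    Fintype.exists_ne_of_one_lt_card (by simp; omega) i
  have hj : j ∈ univ.erase i := mem_erase.2 ⟨hji, mem_univ j⟩
  have hε1 : ε ≤ 1 := le_of_mul_le_mul_right ((hpinch i i).trans_eq (one_mul _).symm) (hpos i)
  have hHS : H - lam i = ∑ k ∈ univ.erase i, lam k := by
    rw [hH, ← add_sum_erase _ lam (mem_univ i), add_sub_cancel_left]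
  rw [hR, hH, sq_sum_sub_sum_sq_eq_erase, ← hH, hHS]
  have hS : 0 < ∑ k ∈ univ.erase i, lam k := sum_pos (fun k _ => hpos k) ⟨j, hj⟩
  have hQS := sum_sq_le_sq_sum_of_nonneg fun k (_ : k ∈ univ.erase i) => (hpos k).le
  refine ⟨?_, div_sqrt_le_inv_of_pinched hε0 hε1 (hpos i) hS hQS
    (mul_sum_sq_le_of_mul_le (fun k _ => (hpos k).le) fun k _ => hpinch k i)⟩
  calc √ε / n ≤ √ε / 2 := by gcongr; exact_mod_cast hn
    _ ≤ _ := sqrt_div_two_le_div_sqrt_of_pinched hε0.le hε1 (hpos i) hS (by positivity) hQS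
        ((hpinch i j).trans (single_le_sum (fun k _ => (hpos k).le) hj))

/-- If `ε λ_max ≤ λ_min` for positive principal curvatures, then the partial
derivatives `ḟ^i = R^{-1/2}(H - λᵢ)` of the speed function `f = R^{1/2}`
satisfy `√ε / n ≤ ḟ^i ≤ 1/ε`. -/
theorem speed_derivative_pinching
    (n : ℕ) (hn : 2 ≤ n) (ε : ℝ) (hε0 : 0 < ε) (hε1 : ε ≤ 1)
    (lam : Fin n → ℝ) (hpos : ∀ i, 0 < lam i)
    (H R : ℝ) (hH : H = ∑ i, lam i) (hR : R = H ^ 2 - ∑ i, (lam i) ^ 2)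
    (hpinch : ∀ i j, ε * lam i ≤ lam j) :
    ∀ i, Real.sqrt ε / (n : ℝ) ≤ (H - lam i) / Real.sqrt R ∧
      (H - lam i) / Real.sqrt R ≤ 1 / ε :=
  speed_derivative_pinching_general n hn ε hε0 lam hpos H R hH hR hpinch
end

section
/- Let n ≥ 2. The function f(λ) = ((Σᵢ λᵢ)² − Σᵢ λᵢ²)^{1/2} = R(λ)^{1/2} is concave on the open positive cone Γ₊ = {λ ∈ ℝⁿ : λᵢ > 0 for all i}. -/
/-!
Since `∑ λᵢ² = ‖λ‖²` for the Euclidean norm, `f` is the Lorentzian time length `√(t² - ‖v‖²)`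
evaluated at the linear image `(∑ λᵢ, λ)`, and on the positive cone `‖λ‖ ≤ ∑ λᵢ`. The time
length is concave on the future cone `‖v‖ ≤ t` of `ℝ × E` for any real normed space `E`: the
triangle inequality reduces this to the plane, where it is the reverse Cauchy–Schwarz
inequality `√(s² - p²) √(t² - q²) ≤ s t - p q`.
-/

open Finset

theorem Real.sqrt_sq_sub_sq_mul_sqrt_sq_sub_sq_le {s p t q : ℝ} (hp : 0 ≤ p) (hps : p ≤ s)
    (hq : 0 ≤ q) (hqt : q ≤ t) :
    √(s ^ 2 - p ^ 2) * √(t ^ 2 - q ^ 2) ≤ s * t - p * q := by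
  rw [← Real.sqrt_mul (by nlinarith), Real.sqrt_le_left (by nlinarith)]
  nlinarith [sq_nonneg (s * q - p * t)]

theorem Real.add_sqrt_sq_sub_sq_le {a b s p t q : ℝ} (ha : 0 ≤ a) (hb : 0 ≤ b)
    (hp : 0 ≤ p) (hps : p ≤ s) (hq : 0 ≤ q) (hqt : q ≤ t) :
    a * √(s ^ 2 - p ^ 2) + b * √(t ^ 2 - q ^ 2)
      ≤ √((a * s + b * t) ^ 2 - (a * p + b * q) ^ 2) := by
  have hs := Real.sq_sqrt (sub_nonneg.2 (pow_le_pow_left₀ hp hps 2))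
  have ht := Real.sq_sqrt (sub_nonneg.2 (pow_le_pow_left₀ hq hqt 2))
  have hmul := Real.sqrt_sq_sub_sq_mul_sqrt_sq_sub_sq_le hp hps hq hqt
  have hle : a * p + b * q ≤ a * s + b * t := by gcongr
  rw [Real.le_sqrt (by positivity) (sub_nonneg.2 (pow_le_pow_left₀ (by positivity) hle 2))]
  linear_combination (2 * a * b) * hmul + a ^ 2 * hs + b ^ 2 * ht

theorem concaveOn_sqrt_sq_sub_norm_sq (E : Type*) [NormedAddCommGroup E] [NormedSpace ℝ E] :
    ConcaveOn ℝ {x : ℝ × E | ‖x.2‖ ≤ x.1} (fun x => √(x.1 ^ 2 - ‖x.2‖ ^ 2)) := by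
  have hnorm : ∀ ⦃a b : ℝ⦄ (v w : E), 0 ≤ a → 0 ≤ b → ‖a • v + b • w‖ ≤ a * ‖v‖ + b * ‖w‖ :=
    fun a b v w ha hb => (norm_add_le _ _).trans_eq <| by
      rw [norm_smul_of_nonneg ha, norm_smul_of_nonneg hb]
  refine ⟨fun x hx y hy a b ha hb _ => ?_, fun x hx y hy a b ha hb _ => ?_⟩
  · simp only [Set.mem_ofPred_eq, Prod.fst_add, Prod.snd_add, Prod.smul_fst, Prod.smul_snd,
      smul_eq_mul] at hx hy ⊢
    exact (hnorm _ _ ha hb).trans (by gcongr)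
  · simp only [Set.mem_ofPred_eq, Prod.fst_add, Prod.snd_add, Prod.smul_fst, Prod.smul_snd,
      smul_eq_mul] at hx hy ⊢
    refine (Real.add_sqrt_sq_sub_sq_le ha hb (norm_nonneg _) hx (norm_nonneg _) hy).trans ?_
    gcongr
    exact hnorm _ _ ha hb

theorem sqrt_scalarCurvature_concave_general
    (n : ℕ) :
    ConcaveOn ℝ {lam : Fin n → ℝ | ∀ i, 0 < lam i}
      (fun lam => Real.sqrt ((∑ i, lam i) ^ 2 - ∑ i, (lam i) ^ 2)) := by
  let L : (Fin n → ℝ) →ₗ[ℝ] ℝ × EuclideanSpace ℝ (Fin n) :=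
    (∑ i, LinearMap.proj i).prod (WithLp.linearEquiv 2 ℝ _).symm.toLinearMap
  have hL : ∀ lam, (L lam).1 = ∑ i, lam i ∧ ‖(L lam).2‖ ^ 2 = ∑ i, lam i ^ 2 := fun lam => by
    simp [L, EuclideanSpace.norm_sq_eq]
  have hcone : {lam : Fin n → ℝ | ∀ i, 0 < lam i} ⊆ L ⁻¹' {x | ‖x.2‖ ≤ x.1} := fun lam hlam => by
    have hsum : 0 ≤ ∑ i, lam i := sum_nonneg fun i _ => (hlam i).le
    refine le_of_pow_le_pow_left₀ two_ne_zero ((hL lam).1 ▸ hsum) ?_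
    rw [(hL lam).1, (hL lam).2]
    exact sum_sq_le_sq_sum_of_nonneg fun i _ => (hlam i).le
  have hconvex : Convex ℝ {lam : Fin n → ℝ | ∀ i, 0 < lam i} := by
    simpa [Set.pi] using convex_pi (s := Set.univ) fun i _ => convex_Ioi (0 : ℝ)
  refine (((concaveOn_sqrt_sq_sub_norm_sq _).comp_linearMap L).subset hcone hconvex).congr
    fun lam _ => ?_
  simp only [Function.comp_apply, (hL lam).1, (hL lam).2]

/-- The speed function `f(λ) = R(λ)^{1/2} = ((Σ λᵢ)² - Σ λᵢ²)^{1/2}` is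
concave on the open positive cone `Γ₊`. -/
theorem sqrt_scalarCurvature_concave
    (n : ℕ) (hn : 2 ≤ n) :
    ConcaveOn ℝ {lam : Fin n → ℝ | ∀ i, 0 < lam i}
      (fun lam => Real.sqrt ((∑ i, lam i) ^ 2 - ∑ i, (lam i) ^ 2)) :=
  sqrt_scalarCurvature_concave_general n
end

section
/- Let n ≥ 2. The function f(λ) = R(λ)^{1/2} is inverse-concave on the open positive cone: the function f*(λ) = −f(λ₁^{−1},…,λₙ^{−1}) = −(Σ_{i≠j} λᵢ^{−1} λⱼ^{−1})^{1/2} is concave on Γ₊ = {λ ∈ ℝⁿ : λᵢ > 0 for all i}. -/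
open Finset

/-! For positive `x`, `R(x⁻¹) = Σ_{i ≠ j} (xᵢ xⱼ)⁻¹` is the squared Euclidean norm of the vector
with entries `(xᵢ xⱼ)^{-1/2}`, `i ≠ j`. Each entry `exp (-(log xᵢ + log xⱼ) / 2)` is a
nonnegative convex function of `x` by concavity of `log`, and the Euclidean norm is convex and
monotone on nonnegative vectors, so `x ↦ R(x⁻¹)^{1/2}` is convex on the positive cone. -/

theorem sq_sum_sub_sum_sq {ι R : Type*} [DecidableEq ι] [CommRing R] (s : Finset ι)
    (a : ι → R) :
    (∑ i ∈ s, a i) ^ 2 - ∑ i ∈ s, a i ^ 2 = ∑ p ∈ s.offDiag, a p.1 * a p.2 := by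
  rw [sq, sum_mul_sum, ← sum_product', ← diag_union_offDiag,
    sum_union (disjoint_diag_offDiag s), sum_diag]
  simp only [sq, add_sub_cancel_left]

theorem convex_positiveCone (ι : Type*) : Convex ℝ {x : ι → ℝ | ∀ i, 0 < x i} := by
  simpa [Set.pi] using convex_pi (s := Set.univ) fun (_ : ι) _ => convex_Ioi (0 : ℝ)

section

variable {E : Type*} [AddCommGroup E] [Module ℝ E] {s : Set E}

theorem ConvexOn.exp {f : E → ℝ} (hf : ConvexOn ℝ s f) :
    ConvexOn ℝ s fun x => Real.exp (f x) :=
  ⟨hf.1, fun _ hx _ hy _ _ ha hb hab =>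
    (Real.exp_le_exp.2 (hf.2 hx hy ha hb hab)).trans
      (convexOn_exp.2 (Set.mem_univ _) (Set.mem_univ _) ha hb hab)⟩

theorem ConvexOn.sqrt_sum_sq {ι : Type*} (hs : Convex ℝ s) (t : Finset ι) {f : ι → E → ℝ}
    (hf : ∀ i ∈ t, ConvexOn ℝ s (f i)) (hf₀ : ∀ i ∈ t, ∀ x ∈ s, 0 ≤ f i x) :
    ConvexOn ℝ s fun x => √(∑ i ∈ t, f i x ^ 2) := by
  have norm_eq (v : ι → ℝ) :
      ‖(WithLp.toLp 2 fun i : t => v i : EuclideanSpace ℝ t)‖ = √(∑ i ∈ t, v i ^ 2) := by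
    rw [EuclideanSpace.norm_eq, ← sum_coe_sort t]
    simp
  refine ⟨hs, fun x hx y hy a b ha hb hab => ?_⟩
  calc √(∑ i ∈ t, f i (a • x + b • y) ^ 2)
      ≤ √(∑ i ∈ t, (a * f i x + b * f i y) ^ 2) := by
        gcongr with i hi
        · exact hf₀ i hi _ (hs hx hy ha hb hab)
        · exact (hf i hi).2 hx hy ha hb hab
    _ = ‖a • (WithLp.toLp 2 fun i : t => f i x : EuclideanSpace ℝ t) +
          b • (WithLp.toLp 2 fun i : t => f i y)‖ :=
        (norm_eq fun i => a * f i x + b * f i y).symm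
    _ ≤ a * √(∑ i ∈ t, f i x ^ 2) + b * √(∑ i ∈ t, f i y ^ 2) := by
        refine (norm_add_le _ _).trans_eq ?_
        rw [norm_smul, norm_smul, norm_eq fun i => f i x, norm_eq fun i => f i y,
          Real.norm_of_nonneg ha, Real.norm_of_nonneg hb]

end

theorem Real.sqrt_inv_mul_inv_eq_exp {a b : ℝ} (ha : 0 < a) (hb : 0 < b) :
    √(a⁻¹ * b⁻¹) = Real.exp (-(Real.log a + Real.log b) / 2) := by
  rw [← mul_inv, Real.sqrt_eq_rpow, Real.rpow_def_of_pos (inv_pos.2 (mul_pos ha hb)),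
    Real.log_inv, Real.log_mul ha.ne' hb.ne']
  ring_nf

theorem convexOn_sqrt_inv_mul_inv {ι : Type*} (i j : ι) :
    ConvexOn ℝ {x : ι → ℝ | ∀ k, 0 < x k} fun x => √((x i)⁻¹ * (x j)⁻¹) := by
  have log_concave (k : ι) : ConcaveOn ℝ {x : ι → ℝ | ∀ k, 0 < x k} fun x => Real.log (x k) :=
    ⟨convex_positiveCone ι, fun _ hx _ hy _ _ ha hb hab =>
      strictConcaveOn_log_Ioi.concaveOn.2 (hx k) (hy k) ha hb hab⟩
  refine (((log_concave i).add (log_concave j)).neg.smul (c := (2 : ℝ)⁻¹) (by norm_num)).exp.congr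
    fun x hx => ?_
  rw [Real.sqrt_inv_mul_inv_eq_exp (hx i) (hx j)]
  simp only [Pi.neg_apply, Pi.add_apply, smul_eq_mul]
  ring_nf

theorem sqrt_scalarCurvature_inverse_concave_general
    (n : ℕ) :
    ConcaveOn ℝ {lam : Fin n → ℝ | ∀ i, 0 < lam i}
      (fun lam =>
        -Real.sqrt ((∑ i, (lam i)⁻¹) ^ 2 - ∑ i, ((lam i)⁻¹) ^ 2)) := by
  have hconvex := ConvexOn.sqrt_sum_sq (convex_positiveCone (Fin n)) univ.offDiag
    (fun p _ => convexOn_sqrt_inv_mul_inv p.1 p.2) fun _ _ _ _ => Real.sqrt_nonneg _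
  refine hconvex.neg.congr fun x hx => ?_
  rw [Pi.neg_apply, sq_sum_sub_sum_sq]
  congr 2
  refine sum_congr rfl fun p _ => Real.sq_sqrt ?_
  exact mul_nonneg (inv_nonneg.2 (hx p.1).le) (inv_nonneg.2 (hx p.2).le)

/-- The speed function `f = R^{1/2}` is inverse-concave: the function
`f*(λ) = -f(λ₁⁻¹, …, λₙ⁻¹) = -((Σ λᵢ⁻¹)² - Σ λᵢ⁻²)^{1/2}` is concave on the
open positive cone `Γ₊`. -/
theorem sqrt_scalarCurvature_inverse_concave
    (n : ℕ) (hn : 2 ≤ n) :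
    ConcaveOn ℝ {lam : Fin n → ℝ | ∀ i, 0 < lam i}
      (fun lam =>
        -Real.sqrt ((∑ i, (lam i)⁻¹) ^ 2 - ∑ i, ((lam i)⁻¹) ^ 2)) :=
  sqrt_scalarCurvature_inverse_concave_general n
end

section
/- Let n ≥ 2 and let λ = (λ₁,…,λₙ) ∈ ℝⁿ with λᵢ > 0 for all i and R(λ) > 0. Then for all indices k ≠ l with λₖ ≠ λₗ, the speed function f = R^{1/2}, whose partial derivatives are ḟ^i = R^{−1/2}(H − λᵢ), satisfies Andrews' first inverse-concavity criterion: (ḟ^k − ḟ^l)/(λₖ − λₗ) + ḟ^k/λₗ + ḟ^l/λₖ ≥ 0. Equivalently, (H − λₖ)/λₗ + (H − λₗ)/λₖ ≥ 1. -/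
/-!
Since `ḟ^i = c (H - λᵢ)` with `c = R^{-1/2} ≥ 0` is affine in `λᵢ`, its divided difference is `-c`,
and the criterion becomes `c ((H - λₖ)/λₗ + (H - λₗ)/λₖ - 1) ≥ 0`. As all curvatures are positive,
`H ≥ λₖ + λₗ`, so already `(H - λₖ)/λₗ ≥ 1` while `(H - λₗ)/λₖ ≥ 0`.
-/

open Finset

lemma Finset.add_le_sum_of_ne {ι M : Type*} [Fintype ι] [AddCommMonoid M] [PartialOrder M]
    [IsOrderedAddMonoid M] {f : ι → M} (hf : ∀ i, 0 ≤ f i) {k l : ι} (hkl : k ≠ l) :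
    f k + f l ≤ ∑ i, f i := by
  classical
  rw [← sum_pair hkl]
  exact sum_le_sum_of_subset_of_nonneg (subset_univ _) fun i _ _ ↦ hf i

lemma one_le_sub_div_add_sub_div {H a b : ℝ} (ha : 0 < a) (hb : 0 < b) (hab : a + b ≤ H) :
    1 ≤ (H - a) / b + (H - b) / a := by
  have hHa : 1 ≤ (H - a) / b := by rw [one_le_div hb]; linarith
  have hHb : 0 ≤ (H - b) / a := div_nonneg (by linarith) ha.le
  linarith

lemma affine_andrews_expression_eq (c H a b : ℝ) (hab : a ≠ b) :
    (c * (H - a) - c * (H - b)) / (a - b) + c * (H - a) / b + c * (H - b) / a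
      = c * ((H - a) / b + (H - b) / a - 1) := by
  have hdiff : (c * (H - a) - c * (H - b)) / (a - b) = -c := by
    rw [show c * (H - a) - c * (H - b) = -c * (a - b) by ring,
      mul_div_cancel_right₀ _ (sub_ne_zero.mpr hab)]
  rw [hdiff, mul_div_assoc, mul_div_assoc]
  ring

theorem andrews_first_criterion_general
    (n : ℕ)
    (lam : Fin n → ℝ) (hpos : ∀ i, 0 < lam i)
    (H R : ℝ) (hH : H = ∑ i, lam i)
    (fdot : Fin n → ℝ) (hfdot : ∀ i, fdot i = (H - lam i) / Real.sqrt R) :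
    ∀ k l, k ≠ l → lam k ≠ lam l →
      0 ≤ (fdot k - fdot l) / (lam k - lam l)
        + fdot k / lam l + fdot l / lam k := by
  intro k l hkl hne
  have hfdot' : ∀ i, fdot i = (Real.sqrt R)⁻¹ * (H - lam i) := fun i ↦ by
    rw [hfdot, div_eq_inv_mul]
  have hsum : lam k + lam l ≤ H := hH ▸ add_le_sum_of_ne (fun i ↦ (hpos i).le) hkl
  rw [hfdot', hfdot', affine_andrews_expression_eq _ _ _ _ hne]
  exact mul_nonneg (inv_nonneg.mpr (Real.sqrt_nonneg R))
    (sub_nonneg.mpr (one_le_sub_div_add_sub_div (hpos k) (hpos l) hsum))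

/-- Andrews' first inverse-concavity criterion for the speed function
`f = R^{1/2}` with partial derivatives `ḟ^i = R^{-1/2}(H - λᵢ)`:
for `k ≠ l` with `λₖ ≠ λₗ`,
`(ḟ^k - ḟ^l)/(λₖ - λₗ) + ḟ^k/λₗ + ḟ^l/λₖ ≥ 0`. -/
theorem andrews_first_criterion
    (n : ℕ) (hn : 2 ≤ n)
    (lam : Fin n → ℝ) (hpos : ∀ i, 0 < lam i)
    (H R : ℝ) (hH : H = ∑ i, lam i) (hR : R = H ^ 2 - ∑ i, (lam i) ^ 2)
    (hRpos : 0 < R)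
    (fdot : Fin n → ℝ) (hfdot : ∀ i, fdot i = (H - lam i) / Real.sqrt R) :
    ∀ k l, k ≠ l → lam k ≠ lam l →
      0 ≤ (fdot k - fdot l) / (lam k - lam l)
        + fdot k / lam l + fdot l / lam k :=
  andrews_first_criterion_general n lam hpos H R hH fdot hfdot
end

section
/- Let n ≥ 2 and let λ = (λ₁,…,λₙ) ∈ ℝⁿ with λᵢ > 0 for all i. Then the symmetric n×n real matrix M with entries M_{kl} = (1 − δ_{kl}) − (H(λ) − λₖ)(H(λ) − λₗ)/R(λ) + 2 δ_{kl} (H(λ) − λₖ)/λₖ is positive semidefinite. (This matrix equals R^{1/2}·(f̈^{kl} + 2(ḟ^k/λₖ)δ_{kl}) for the speed function f = R^{1/2}, whose first and second partial derivatives are ḟ^i = R^{−1/2}(H − λᵢ) and f̈^{ij} = −R^{−3/2}(H − λᵢ)(H − λⱼ) + R^{−1/2}(1 − δ_{ij}); its positive semidefiniteness is Andrews' second inverse-concavity criterion for f.) -/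
/-!
Conjugating by `diagonal λ⁻¹`, the matrix becomes `W + 2 diagonal r - R⁻¹ r rᵀ`, where
`W k l = λₖ λₗ` off the diagonal and `0` on it, `r = W 1`, i.e. `rₖ = λₖ (H - λₖ)`, and
`R = ∑ rₖ`. This is the sum of the signless Laplacian `diagonal r + W`, whose quadratic form is
`½ ∑ W k l (xₖ + xₗ)²`, and of `diagonal r - R⁻¹ r rᵀ`, which is positive semidefinite by the
Cauchy–Schwarz inequality `(∑ rₖ xₖ)² ≤ (∑ rₖ) (∑ rₖ xₖ²)`.
-/

open Finset Matrix

namespace Matrix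

variable {ι : Type*} [DecidableEq ι]

def offDiagProd (lam : ι → ℝ) : Matrix ι ι ℝ :=
  of fun k l ↦ if k = l then 0 else lam k * lam l

theorem offDiagProd_isHermitian (lam : ι → ℝ) : (offDiagProd lam).IsHermitian := by
  ext k l
  by_cases h : k = l
  · simp [offDiagProd, h]
  · simp [offDiagProd, h, Ne.symm h, mul_comm]

theorem offDiagProd_nonneg {lam : ι → ℝ} (hlam : 0 ≤ lam) (k l : ι) :
    0 ≤ offDiagProd lam k l := by
  by_cases h : k = l
  · simp [offDiagProd, h]
  · simpa [offDiagProd, h] using mul_nonneg (hlam k) (hlam l)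

variable [Fintype ι]

theorem offDiagProd_mulVec_one (lam : ι → ℝ) :
    offDiagProd lam *ᵥ 1 = fun k ↦ lam k * (∑ i, lam i - lam k) := by
  ext k
  have hdrop : ∀ l, (if k = l then 0 else lam k * lam l)
      = lam k * lam l - if k = l then lam k * lam l else 0 := fun l ↦ by split_ifs <;> simp
  simp only [offDiagProd, mulVec, dotProduct, of_apply, Pi.one_apply, mul_one, hdrop,
    sum_sub_distrib, sum_ite_eq, mem_univ, if_true, ← mul_sum, mul_sub]

theorem posSemidef_diagonal_mulVec_one_add {W : Matrix ι ι ℝ} (hW : W.IsHermitian)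
    (hW₀ : ∀ i j, 0 ≤ W i j) : (diagonal (W *ᵥ 1) + W).PosSemidef := by
  refine .of_dotProduct_mulVec_nonneg ((isHermitian_diagonal _).add hW) fun x ↦ ?_
  have hsymm : ∀ i j, W j i = W i j := fun i j ↦ by simpa using hW.apply i j
  have hform : star x ⬝ᵥ ((diagonal (W *ᵥ 1) + W) *ᵥ x)
      = ∑ i, ∑ j, W i j * (x i ^ 2 + x i * x j) := by
    rw [add_mulVec, dotProduct_add]
    simp only [star_trivial, dotProduct, mulVec_diagonal]
    simp only [mulVec, dotProduct, Pi.one_apply, mul_one, sum_mul, mul_sum, ← sum_add_distrib]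
    congr! 2; ring
  have hswap : ∑ i, ∑ j, W i j * (x i ^ 2 + x i * x j)
      = ∑ i, ∑ j, W i j * (x j ^ 2 + x j * x i) := by
    rw [sum_comm]; simp_rw [hsymm]
  have htwice : 2 * ∑ i, ∑ j, W i j * (x i ^ 2 + x i * x j)
      = ∑ i, ∑ j, W i j * (x i + x j) ^ 2 := by
    rw [two_mul]; nth_rw 2 [hswap]
    simp_rw [← sum_add_distrib]; congr! 2; ring
  have hsquares : 0 ≤ ∑ i, ∑ j, W i j * (x i + x j) ^ 2 :=
    sum_nonneg fun i _ ↦ sum_nonneg fun j _ ↦ mul_nonneg (hW₀ i j) (sq_nonneg _)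
  rw [hform]
  linarith

theorem posSemidef_diagonal_sub_inv_smul_vecMulVec {r : ι → ℝ} (hr : 0 ≤ r) :
    (diagonal r - (∑ i, r i)⁻¹ • vecMulVec r r).PosSemidef := by
  refine .of_dotProduct_mulVec_nonneg ?_ fun x ↦ ?_
  · ext i j
    by_cases h : i = j
    · subst h; simp
    · simp [vecMulVec, h, Ne.symm h, mul_comm]
  rw [sub_mulVec, dotProduct_sub, smul_mulVec, dotProduct_smul, vecMulVec_mulVec]
  simp only [star_trivial, dotProduct, mulVec_diagonal, smul_eq_mul, Pi.smul_apply,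
    op_smul_eq_mul]
  have hcs : (∑ i, r i * x i) ^ 2 ≤ (∑ i, r i) * ∑ i, r i * x i ^ 2 :=
    sum_sq_le_sum_mul_sum_of_sq_le_mul _ (fun i _ ↦ hr i)
      (fun i _ ↦ mul_nonneg (hr i) (sq_nonneg _)) fun i _ ↦ by ring_nf; rfl
  have hq : (∑ i, r i)⁻¹ * (∑ i, r i * x i) ^ 2 ≤ ∑ i, r i * x i ^ 2 := by
    rcases (sum_nonneg fun i _ ↦ hr i : 0 ≤ ∑ i, r i).eq_or_lt' with h | h
    · rw [h, _root_.inv_zero, zero_mul]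
      exact sum_nonneg fun i _ ↦ mul_nonneg (hr i) (sq_nonneg _)
    · rwa [inv_mul_le_iff₀ h]
  have hquad : ∑ i, x i * (r i * x i) = ∑ i, r i * x i ^ 2 := by congr! 1; ring
  have hlin : ∑ i, x i * (r i * ∑ j, r j * x j) = (∑ i, r i * x i) ^ 2 := by
    rw [sq, sum_mul]; congr! 1; ring
  rw [hquad, hlin, sub_nonneg]
  exact hq

end Matrix

theorem andrews_second_criterion_general
    (n : ℕ)
    (lam : Fin n → ℝ) (hpos : ∀ i, 0 < lam i)
    (H R : ℝ) (hH : H = ∑ i, lam i) (hR : R = H ^ 2 - ∑ i, (lam i) ^ 2) :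
    (Matrix.of fun k l : Fin n =>
      (if k = l then (0 : ℝ) else 1)
        - (H - lam k) * (H - lam l) / R
        + (if k = l then 2 * (H - lam k) / lam k else 0)).PosSemidef := by
  have hW₀ := offDiagProd_nonneg fun i ↦ (hpos i).le
  have hrow_nonneg : 0 ≤ offDiagProd lam *ᵥ 1 := fun k ↦
    show 0 ≤ ∑ l, offDiagProd lam k l * 1 from
      sum_nonneg fun l _ ↦ mul_nonneg (hW₀ k l) zero_le_one
  have hsum : ∑ k, lam k * (H - lam k) = R := by
    simp only [mul_sub, sum_sub_distrib, ← sum_mul, ← hH, hR, sq]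
  have hN := (posSemidef_diagonal_mulVec_one_add (offDiagProd_isHermitian lam) hW₀).add
    (posSemidef_diagonal_sub_inv_smul_vecMulVec hrow_nonneg)
  rw [offDiagProd_mulVec_one, ← hH, hsum] at hN
  convert hN.conjTranspose_mul_mul_same (diagonal fun k ↦ (lam k)⁻¹) using 1
  ext k l
  simp only [of_apply, conjTranspose_eq_transpose_of_trivial, diagonal_transpose, offDiagProd,
    vecMulVec, smul_of, mul_diagonal, diagonal_mul, Matrix.add_apply, Matrix.sub_apply,
    diagonal_apply, Pi.smul_apply, smul_eq_mul]
  have hk := (hpos k).ne'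
  have hl := (hpos l).ne'
  split_ifs with h
  · subst h; field_simp; ring
  · field_simp; ring

/-- Andrews' second inverse-concavity criterion for `f = R^{1/2}`: the matrix
`M_{kl} = (1 - δ_{kl}) - (H - λₖ)(H - λₗ)/R + 2 δ_{kl} (H - λₖ)/λₖ`
is positive semidefinite. -/
theorem andrews_second_criterion
    (n : ℕ) (hn : 2 ≤ n)
    (lam : Fin n → ℝ) (hpos : ∀ i, 0 < lam i)
    (H R : ℝ) (hH : H = ∑ i, lam i) (hR : R = H ^ 2 - ∑ i, (lam i) ^ 2) :
    (Matrix.of fun k l : Fin n =>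
      (if k = l then (0 : ℝ) else 1)
        - (H - lam k) * (H - lam l) / R
        + (if k = l then 2 * (H - lam k) / lam k else 0)).PosSemidef :=
  andrews_second_criterion_general n lam hpos H R hH hR
end

section
/- Let (Ω, μ) be a measure space and let ψ, S, k : Ω → ℝ be measurable functions that are positive μ-almost everywhere. Assume each of the four integrals ∫ ψ²/S dμ, ∫ ψ k^{−1/2} dμ, ∫ S/k dμ and ∫ ψ³ k^{1/2} S^{−2} dμ is finite. Then (∫ ψ²/S dμ) · (∫ ψ k^{−1/2} dμ) ≤ (∫ S/k dμ) · (∫ ψ³ k^{1/2} S^{−2} dμ). -/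
open MeasureTheory

/-!
Write `A = ∫ ψ²/S`, `B = ∫ ψ k^{-1/2}`, `C = ∫ S/k`, `D = ∫ ψ³ k^{1/2}/S²`. Pointwise
`(ψ k^{-1/2})² = (S/k)(ψ²/S)` and `(ψ²/S)² = (ψ k^{-1/2})(ψ³ k^{1/2}/S²)`, so Cauchy–Schwarz gives
`B² ≤ C A` and `A² ≤ B D`. Multiplying, `(A B)² ≤ (A B)(C D)`, hence `A B ≤ C D`.
-/

section

variable {Ω : Type*} [MeasurableSpace Ω] {μ : Measure Ω}

theorem sq_integral_mul_le_integral_sq_mul_integral_sq {F G : Ω → ℝ}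
    (hF : MemLp F 2 μ) (hG : MemLp G 2 μ) :
    (∫ x, F x * G x ∂μ) ^ 2 ≤ (∫ x, F x ^ 2 ∂μ) * ∫ x, G x ^ 2 ∂μ := by
  have hpq : Real.HolderConjugate 2 2 := .two_two
  have h2 : ENNReal.ofReal 2 = 2 := by norm_num
  have holder := integral_mul_norm_le_Lp_mul_Lq hpq (h2 ▸ hF) (h2 ▸ hG)
  simp only [Real.norm_eq_abs, Real.rpow_two, sq_abs, ← Real.sqrt_eq_rpow] at holder
  have habs : |∫ x, F x * G x ∂μ| ≤ ∫ x, |F x| * |G x| ∂μ := by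
    simpa only [abs_mul] using abs_integral_le_integral_abs (f := fun x => F x * G x) (μ := μ)
  calc (∫ x, F x * G x ∂μ) ^ 2 = |∫ x, F x * G x ∂μ| ^ 2 := (sq_abs _).symm
    _ ≤ (√(∫ x, F x ^ 2 ∂μ) * √(∫ x, G x ^ 2 ∂μ)) ^ 2 := by
      gcongr
      exact habs.trans holder
    _ = (∫ x, F x ^ 2 ∂μ) * ∫ x, G x ^ 2 ∂μ := by
      rw [mul_pow, Real.sq_sqrt (integral_nonneg fun _ => sq_nonneg _),
        Real.sq_sqrt (integral_nonneg fun _ => sq_nonneg _)]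

theorem MeasureTheory.Integrable.memLp_two_sqrt {f : Ω → ℝ} (hf : Integrable f μ) (hf0 : 0 ≤ᵐ[μ] f) :
    MemLp (fun x => √(f x)) 2 μ := by
  refine (memLp_two_iff_integrable_sq
    (Real.continuous_sqrt.comp_aestronglyMeasurable hf.aestronglyMeasurable)).2 ?_
  refine hf.congr ?_
  filter_upwards [hf0] with x hx using (Real.sq_sqrt hx).symm

theorem sq_integral_le_integral_mul_integral_of_sq_le_mul {f g h : Ω → ℝ}
    (hf : Integrable f μ) (hg : Integrable g μ) (hf0 : 0 ≤ᵐ[μ] f) (hg0 : 0 ≤ᵐ[μ] g)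
    (hfg : ∀ᵐ x ∂μ, h x ^ 2 ≤ f x * g x) :
    (∫ x, h x ∂μ) ^ 2 ≤ (∫ x, f x ∂μ) * ∫ x, g x ∂μ := by
  have hF := hf.memLp_two_sqrt hf0
  have hG := hg.memLp_two_sqrt hg0
  have hle : ∫ x, |h x| ∂μ ≤ ∫ x, √(f x) * √(g x) ∂μ := by
    refine integral_mono_of_nonneg (.of_forall fun _ => abs_nonneg _) (hF.integrable_mul hG) ?_
    filter_upwards [hfg, hf0] with x hx hx0
    rw [← Real.sqrt_mul hx0]
    exact Real.abs_le_sqrt hx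
  have hsq : ∀ {u : Ω → ℝ}, 0 ≤ᵐ[μ] u → ∫ x, √(u x) ^ 2 ∂μ = ∫ x, u x ∂μ := fun hu0 =>
    integral_congr_ae <| by filter_upwards [hu0] with x hx using Real.sq_sqrt hx
  calc (∫ x, h x ∂μ) ^ 2 = |∫ x, h x ∂μ| ^ 2 := (sq_abs _).symm
    _ ≤ (∫ x, √(f x) * √(g x) ∂μ) ^ 2 := by
      gcongr
      exact abs_integral_le_integral_abs.trans hle
    _ ≤ (∫ x, f x ∂μ) * ∫ x, g x ∂μ := by
      rw [← hsq hf0, ← hsq hg0]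
      exact sq_integral_mul_le_integral_sq_mul_integral_sq hF hG

end

theorem mul_le_mul_of_sq_le_mul_of_sq_le_mul {a b c d : ℝ} (ha : 0 ≤ a) (hb : 0 ≤ b)
    (hcd : 0 ≤ c * d) (hab : a ^ 2 ≤ b * d) (hba : b ^ 2 ≤ c * a) : a * b ≤ c * d := by
  rcases (mul_nonneg ha hb).eq_or_lt with h0 | hpos
  · rw [← h0]; exact hcd
  · refine le_of_mul_le_mul_left ?_ hpos
    calc a * b * (a * b) = a ^ 2 * b ^ 2 := by ring
      _ ≤ (b * d) * (c * a) := mul_le_mul hab hba (sq_nonneg _) (by nlinarith)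
      _ = a * b * (c * d) := by ring

theorem holder_chain_monotonicity_general
    {Ω : Type*} [MeasurableSpace Ω] (μ : Measure Ω)
    (ψ S k : Ω → ℝ)
    (hψ : ∀ᵐ x ∂μ, 0 < ψ x) (hS : ∀ᵐ x ∂μ, 0 < S x) (hk : ∀ᵐ x ∂μ, 0 < k x)
    (h1 : Integrable (fun x => (ψ x) ^ 2 / S x) μ)
    (h2 : Integrable (fun x => ψ x / Real.sqrt (k x)) μ)
    (h3 : Integrable (fun x => S x / k x) μ)
    (h4 : Integrable (fun x => (ψ x) ^ 3 * Real.sqrt (k x) / (S x) ^ 2) μ) :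
    (∫ x, (ψ x) ^ 2 / S x ∂μ) * (∫ x, ψ x / Real.sqrt (k x) ∂μ)
      ≤ (∫ x, S x / k x ∂μ)
        * (∫ x, (ψ x) ^ 3 * Real.sqrt (k x) / (S x) ^ 2 ∂μ) := by
  have hA0 : 0 ≤ᵐ[μ] fun x => ψ x ^ 2 / S x := by
    filter_upwards [hS] with x hSx using by positivity
  have hB0 : 0 ≤ᵐ[μ] fun x => ψ x / √(k x) := by
    filter_upwards [hψ] with x hψx using by positivity
  have hC0 : 0 ≤ᵐ[μ] fun x => S x / k x := by
    filter_upwards [hS, hk] with x hSx hkx using by positivity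
  have hD0 : 0 ≤ᵐ[μ] fun x => ψ x ^ 3 * √(k x) / S x ^ 2 := by
    filter_upwards [hψ] with x hψx using by positivity
  have hBCA := sq_integral_le_integral_mul_integral_of_sq_le_mul (h := fun x => ψ x / √(k x))
    h3 h1 hC0 hA0 <| by
      filter_upwards [hS, hk] with x hSx hkx
      refine le_of_eq ?_
      rw [div_pow, Real.sq_sqrt hkx.le]
      field_simp
  have hABD := sq_integral_le_integral_mul_integral_of_sq_le_mul (h := fun x => ψ x ^ 2 / S x)
    h2 h4 hB0 hD0 <| by
      filter_upwards [hS, hk] with x hSx hkx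
      have : √(k x) ≠ 0 := (Real.sqrt_pos.2 hkx).ne'
      refine le_of_eq ?_
      field_simp
  exact mul_le_mul_of_sq_le_mul_of_sq_le_mul (integral_nonneg_of_ae hA0)
    (integral_nonneg_of_ae hB0)
    (mul_nonneg (integral_nonneg_of_ae hC0) (integral_nonneg_of_ae hD0)) hABD hBCA

/-- The Hölder/Cauchy–Schwarz chain underlying the monotonicity lemma for the
normalized two-dimensional anisotropic Gauss curvature flow:
`(∫ ψ²/S)(∫ ψ k^{-1/2}) ≤ (∫ S/k)(∫ ψ³ k^{1/2} / S²)`. -/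
theorem holder_chain_monotonicity
    {Ω : Type*} [MeasurableSpace Ω] (μ : Measure Ω)
    (ψ S k : Ω → ℝ)
    (hψm : Measurable ψ) (hSm : Measurable S) (hkm : Measurable k)
    (hψ : ∀ᵐ x ∂μ, 0 < ψ x) (hS : ∀ᵐ x ∂μ, 0 < S x) (hk : ∀ᵐ x ∂μ, 0 < k x)
    (h1 : Integrable (fun x => (ψ x) ^ 2 / S x) μ)
    (h2 : Integrable (fun x => ψ x / Real.sqrt (k x)) μ)
    (h3 : Integrable (fun x => S x / k x) μ)
    (h4 : Integrable (fun x => (ψ x) ^ 3 * Real.sqrt (k x) / (S x) ^ 2) μ) :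
    (∫ x, (ψ x) ^ 2 / S x ∂μ) * (∫ x, ψ x / Real.sqrt (k x) ∂μ)
      ≤ (∫ x, S x / k x ∂μ)
        * (∫ x, (ψ x) ^ 3 * Real.sqrt (k x) / (S x) ^ 2 ∂μ) :=
  holder_chain_monotonicity_general μ ψ S k hψ hS hk h1 h2 h3 h4
end
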